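/- For any finite sequence of positive integers a₁, …, aₙ, the Gauss measure of the cylinder set of [a₁, a₂, …, aₙ] equals the Gauss measure of the cylinder set of the reversed sequence [aₙ, aₙ₋₁, …, a₁]. -/

import Mathlib

open MeasureTheory Filter

noncomputable def gaussMap (x : ℝ) : ℝ := Int.fract x⁻¹

noncomputable def gaussMeasure : Measure ℝ :=
  (volume.restrict (Set.Ioo (0:ℝ) 1)).withDensity
    (fun x => ENNReal.ofReal (1 / ((1 + x) * Real.log 2)))

noncomputable def cfDigit (x : ℝ) (i : ℕ) : ℕ := ⌊(gaussMap^[i] x)⁻¹⌋₊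

def cylinder (w : List ℕ) : Set ℝ :=
  {x | x ∈ Set.Ioo (0:ℝ) 1 ∧ ∀ i < w.length, cfDigit x i = w.getD i 0}

noncomputable def blockCount (x : ℝ) (m : ℕ) (s : List ℕ) (N : ℕ) : ℕ :=
  Nat.card {i : ℕ // i ≤ N ∧ (gaussMap^[m * i] x) ∈ cylinder s}

def CFNormal (x : ℝ) : Prop :=
  ∀ s : List ℕ, s ≠ [] → (∀ a ∈ s, 0 < a) →
    Tendsto (fun n : ℕ => (blockCount x 1 s n : ℝ) / n) atTop
      (nhds (gaussMeasure (cylinder s)).toReal)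

def cfVal : List ℕ → ℚ
  | [] => 0
  | a :: t => 1 / (a + cfVal t)

def cfQ (a : ℕ → ℕ) : ℕ → ℕ
  | 0 => 0
  | 1 => 1
  | (m+2) => a (m+1) * cfQ a (m+1) + cfQ a m

def cfP (a : ℕ → ℕ) : ℕ → ℕ
  | 0 => 1
  | 1 => 0
  | (m+2) => a (m+1) * cfP a (m+1) + cfP a m

/-! Prepending the digit `a` acts as `t ↦ 1 / (a + t)`, the Möbius action of `!![0, 1; 1, a]`, so up
to the rationals the cylinder of `w` is the open interval between `M • 0` and `M • 1`, where `M` is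
the product of these matrices. Integrating the density gives its Gauss measure as
`|log ((1 + M • 1) / (1 + M • 0))| / log 2`, and for `M = !![A, B; C, D]` the ratio inside is
`(A + B + C + D) D / ((B + D) (C + D))`, symmetric in `B` and `C`. Reversing `w` transposes `M`,
since each factor is symmetric. -/

open Matrix Set

def cfMatrix (w : List ℕ) : Matrix (Fin 2) (Fin 2) ℕ :=
  (w.map fun a => !![0, 1; 1, a]).prod

noncomputable def moebius (M : Matrix (Fin 2) (Fin 2) ℕ) (t : ℝ) : ℝ :=
  (M 0 0 * t + M 0 1) / (M 1 0 * t + M 1 1)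

lemma cfMatrix_cons (a : ℕ) (w : List ℕ) : cfMatrix (a :: w) = !![0, 1; 1, a] * cfMatrix w := by
  simp [cfMatrix]

lemma cfMatrix_reverse (w : List ℕ) : cfMatrix w.reverse = (cfMatrix w)ᵀ := by
  have h : (transpose ∘ fun a : ℕ => !![0, 1; 1, a]) = fun a => !![0, 1; 1, a] := by
    funext a; ext i j; fin_cases i <;> fin_cases j <;> rfl
  rw [cfMatrix, cfMatrix, transpose_list_prod, List.map_map, h, List.map_reverse]

lemma one_le_cfMatrix_one_one {w : List ℕ} (hw : ∀ a ∈ w, 0 < a) : 1 ≤ cfMatrix w 1 1 := by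
  induction w with
  | nil => simp [cfMatrix]
  | cons a w ih =>
    have h11 : cfMatrix (a :: w) 1 1 = cfMatrix w 0 1 + a * cfMatrix w 1 1 := by
      simp [cfMatrix_cons, mul_apply, Fin.sum_univ_two]
    have := ih fun b hb => hw b (List.mem_cons_of_mem a hb)
    rw [h11]
    nlinarith [hw a List.mem_cons_self]

lemma moebius_one (t : ℝ) : moebius 1 t = t := by
  simp [moebius]

lemma moebius_mul (M N : Matrix (Fin 2) (Fin 2) ℕ) {t : ℝ} (ht : (N 1 0 * t + N 1 1 : ℝ) ≠ 0) :
    moebius (M * N) t = moebius M (moebius N t) := by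
  simp only [moebius, mul_apply, Fin.sum_univ_two, Nat.cast_add, Nat.cast_mul]
  field_simp
  ring_nf

lemma moebius_cfMatrix_cons {a : ℕ} {w : List ℕ} (hw : ∀ a ∈ w, 0 < a) {t : ℝ} (ht : 0 ≤ t) :
    moebius (cfMatrix (a :: w)) t = ((a : ℝ) + moebius (cfMatrix w) t)⁻¹ := by
  have hD : (1 : ℝ) ≤ cfMatrix w 1 1 := by exact_mod_cast one_le_cfMatrix_one_one hw
  rw [cfMatrix_cons, moebius_mul _ _ (by positivity)]
  simp [moebius, add_comm]

lemma moebius_cfMatrix_mem_Icc {w : List ℕ} (hw : ∀ a ∈ w, 0 < a) {t : ℝ} (ht : t ∈ Icc (0 : ℝ) 1) :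
    moebius (cfMatrix w) t ∈ Icc (0 : ℝ) 1 := by
  induction w with
  | nil => simpa [cfMatrix, moebius_one] using ht
  | cons a w ih =>
    have hw' : ∀ b ∈ w, 0 < b := fun b hb => hw b (List.mem_cons_of_mem a hb)
    have ha : (1 : ℝ) ≤ a := by exact_mod_cast hw a List.mem_cons_self
    obtain ⟨h0, -⟩ := ih hw'
    rw [moebius_cfMatrix_cons hw' ht.1]
    exact ⟨by positivity, inv_le_one_of_one_le₀ (by linarith)⟩

lemma one_add_moebius_div_one_add_moebius_transpose {M : Matrix (Fin 2) (Fin 2) ℕ}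
    (hM : 1 ≤ M 1 1) :
    (1 + moebius Mᵀ 1) / (1 + moebius Mᵀ 0) = (1 + moebius M 1) / (1 + moebius M 0) := by
  have hD : (1 : ℝ) ≤ M 1 1 := by exact_mod_cast hM
  have hB : (0 : ℝ) ≤ M 0 1 := by positivity
  have hC : (0 : ℝ) ≤ M 1 0 := by positivity
  simp only [moebius, transpose_apply, mul_one, mul_zero, zero_add]
  rw [div_eq_div_iff (by positivity) (by positivity)]
  field_simp
  ring

lemma Irrational.gaussMap {x : ℝ} (hx : Irrational x) : Irrational (gaussMap x) :=
  hx.inv.sub_intCast _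

lemma gaussMap_mem_Ioo {x : ℝ} (hx : Irrational x) : gaussMap x ∈ Ioo (0 : ℝ) 1 :=
  ⟨(Int.fract_nonneg _).lt_of_ne fun h => hx.gaussMap.ne_int 0 (by simpa [gaussMap] using h.symm),
    Int.fract_lt_one _⟩

lemma mem_cylinder_cons_iff {a : ℕ} {w : List ℕ} {x : ℝ} (hx : Irrational x) :
    x ∈ cylinder (a :: w) ↔ x ∈ Ioo (0 : ℝ) 1 ∧ ⌊x⁻¹⌋₊ = a ∧ gaussMap x ∈ cylinder w := by
  simp only [_root_.cylinder, mem_ofPred_eq, List.length_cons, Nat.forall_lt_succ_left,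
    cfDigit, Function.iterate_zero_apply, Function.iterate_succ_apply, List.getD_cons_zero,
    List.getD_cons_succ, gaussMap_mem_Ioo hx, true_and]

lemma floor_inv_eq_and_gaussMap_eq_iff {x y : ℝ} {a : ℕ} (hx : 0 < x) (hy : y ∈ Ico (0 : ℝ) 1) :
    ⌊x⁻¹⌋₊ = a ∧ gaussMap x = y ↔ x⁻¹ = a + y := by
  constructor
  · rintro ⟨rfl, rfl⟩
    rw [gaussMap, ← Int.self_sub_floor, ← Int.natCast_floor_eq_floor (by positivity)]
    push_cast
    ring
  · intro h
    rw [gaussMap, h, Int.fract_natCast_add, Int.fract_eq_self.mpr hy,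
      Nat.floor_eq_iff (by linarith [hy.1])]
    exact ⟨⟨by linarith [hy.1], by linarith [hy.2]⟩, rfl⟩

lemma inv_mem_uIoo_iff {x p q : ℝ} (hx : 0 < x) (hp : 0 < p) (hq : 0 < q) :
    x⁻¹ ∈ uIoo p q ↔ x ∈ uIoo p⁻¹ q⁻¹ := by
  wlog hpq : p ≤ q generalizing p q
  · rw [uIoo_comm, this hq hp (le_of_not_ge hpq), uIoo_comm]
  rw [uIoo_of_le hpq, uIoo_of_ge ((inv_le_inv₀ hq hp).mpr hpq), mem_Ioo, mem_Ioo,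
    lt_inv_comm₀ hp hx, inv_lt_comm₀ hx hq, and_comm]

lemma mem_Ioo_floor_inv_gaussMap_mem_uIoo_iff {a : ℕ} (ha : 0 < a) {α β x : ℝ}
    (hα : α ∈ Icc (0 : ℝ) 1) (hβ : β ∈ Icc (0 : ℝ) 1) :
    x ∈ Ioo (0 : ℝ) 1 ∧ ⌊x⁻¹⌋₊ = a ∧ gaussMap x ∈ uIoo α β ↔
      x ∈ uIoo ((a : ℝ) + α)⁻¹ ((a : ℝ) + β)⁻¹ := by
  have hsub : uIoo α β ⊆ Ioo 0 1 := uIoo_subset_Ioo hα hβ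
  have haα : 0 < (a : ℝ) + α := by have := hα.1; positivity
  have haβ : 0 < (a : ℝ) + β := by have := hβ.1; positivity
  have htranslate (y : ℝ) : (a : ℝ) + y ∈ uIoo ((a : ℝ) + α) ((a : ℝ) + β) ↔ y ∈ uIoo α β := by
    simp only [uIoo, mem_Ioo, min_add_add_left, max_add_add_left, add_lt_add_iff_left]
  constructor
  · rintro ⟨hx, hfloor, hy⟩
    have hinv : x⁻¹ = a + gaussMap x :=
      (floor_inv_eq_and_gaussMap_eq_iff hx.1 (Ioo_subset_Ico_self (hsub hy))).mp ⟨hfloor, rfl⟩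
    rwa [← inv_mem_uIoo_iff hx.1 haα haβ, hinv, htranslate]
  · intro hx
    have hx0 : 0 < x := (lt_min (inv_pos.2 haα) (inv_pos.2 haβ)).trans hx.1
    have hinv : x⁻¹ = a + (x⁻¹ - a) := by ring
    have hy : x⁻¹ - a ∈ uIoo α β := by
      rwa [← htranslate, ← hinv, inv_mem_uIoo_iff hx0 haα haβ]
    obtain ⟨hfloor, hgauss⟩ :=
      (floor_inv_eq_and_gaussMap_eq_iff hx0 (Ioo_subset_Ico_self (hsub hy))).mpr hinv
    have hx1 : 1 < x⁻¹ := by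
      have := (hsub hy).1
      have : (1 : ℝ) ≤ a := by exact_mod_cast ha
      linarith
    exact ⟨⟨hx0, (one_lt_inv₀ hx0).mp hx1⟩, hfloor, hgauss ▸ hy⟩

lemma mem_cylinder_iff_mem_uIoo {w : List ℕ} (hw : ∀ a ∈ w, 0 < a) {x : ℝ} (hx : Irrational x) :
    x ∈ cylinder w ↔ x ∈ uIoo (moebius (cfMatrix w) 0) (moebius (cfMatrix w) 1) := by
  induction w generalizing x with
  | nil => simp [_root_.cylinder, cfMatrix, moebius_one]
  | cons a w ih =>
    have hw' : ∀ b ∈ w, 0 < b := fun b hb => hw b (List.mem_cons_of_mem a hb)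
    rw [mem_cylinder_cons_iff hx, ih hw' hx.gaussMap, moebius_cfMatrix_cons hw' le_rfl,
      moebius_cfMatrix_cons hw' zero_le_one]
    exact mem_Ioo_floor_inv_gaussMap_mem_uIoo_iff (hw a List.mem_cons_self)
      (moebius_cfMatrix_mem_Icc hw' ⟨le_rfl, zero_le_one⟩)
      (moebius_cfMatrix_mem_Icc hw' ⟨zero_le_one, le_rfl⟩)

lemma gaussMeasure_Ioo {α β : ℝ} (hα : 0 ≤ α) (hαβ : α ≤ β) (hβ : β ≤ 1) :
    gaussMeasure (Ioo α β) = ENNReal.ofReal (Real.log ((1 + β) / (1 + α)) / Real.log 2) := by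
  have hlog2 : 0 < Real.log 2 := Real.log_pos one_lt_two
  have hint : IntegrableOn (fun x => 1 / ((1 + x) * Real.log 2)) (Icc α β) :=
    ContinuousOn.integrableOn_Icc <| continuousOn_const.div (by fun_prop) fun x hx =>
      (mul_pos (by linarith [hx.1]) hlog2).ne'
  have hnonneg : 0 ≤ᵐ[volume.restrict (Ioo α β)] fun x => 1 / ((1 + x) * Real.log 2) :=
    ae_restrict_of_forall_mem measurableSet_Ioo fun x hx =>
      (one_div_pos.2 (mul_pos (by linarith [hx.1]) hlog2)).le
  rw [gaussMeasure, withDensity_apply _ measurableSet_Ioo,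
    Measure.restrict_restrict measurableSet_Ioo, inter_eq_left.mpr (Ioo_subset_Ioo hα hβ),
    ← ofReal_integral_eq_lintegral_ofReal (hint.mono_set Ioo_subset_Icc_self) hnonneg,
    ← integral_Ioc_eq_integral_Ioo, ← intervalIntegral.integral_of_le hαβ]
  simp only [← div_div]
  rw [intervalIntegral.integral_div, intervalIntegral.integral_comp_add_left (fun x => 1 / x),
    integral_one_div]
  rw [uIcc_of_le (by linarith)]
  exact fun h => by linarith [h.1]

lemma gaussMeasure_uIoo {α β : ℝ} (hα : α ∈ Icc (0 : ℝ) 1) (hβ : β ∈ Icc (0 : ℝ) 1) :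
    gaussMeasure (uIoo α β) = ENNReal.ofReal (|Real.log ((1 + β) / (1 + α))| / Real.log 2) := by
  wlog hαβ : α ≤ β generalizing α β
  · rw [uIoo_comm, this hβ hα (le_of_not_ge hαβ), ← inv_div (1 + β), Real.log_inv, abs_neg]
  rw [uIoo_of_le hαβ, gaussMeasure_Ioo hα.1 hαβ hβ.2, abs_of_nonneg]
  exact Real.log_nonneg ((one_le_div (by linarith [hα.1])).2 (by linarith))

instance : NullSingletonClass gaussMeasure := by
  unfold gaussMeasure
  infer_instance

lemma gaussMeasure_cylinder {w : List ℕ} (hw : ∀ a ∈ w, 0 < a) :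
    gaussMeasure (cylinder w) = ENNReal.ofReal
      (|Real.log ((1 + moebius (cfMatrix w) 1) / (1 + moebius (cfMatrix w) 0))| / Real.log 2) := by
  rw [← gaussMeasure_uIoo (moebius_cfMatrix_mem_Icc hw ⟨le_rfl, zero_le_one⟩)
    (moebius_cfMatrix_mem_Icc hw ⟨zero_le_one, le_rfl⟩)]
  refine measure_congr (eventuallyEq_set.2 ?_)
  filter_upwards [(countable_range ((↑) : ℚ → ℝ)).ae_notMem gaussMeasure] with x hx
  exact mem_cylinder_iff_mem_uIoo hw hx

theorem gauss_measure_cylinder_reverse (w : List ℕ) (hw : ∀ a ∈ w, 0 < a) :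
    gaussMeasure (cylinder w) = gaussMeasure (cylinder w.reverse) := by
  rw [gaussMeasure_cylinder hw, gaussMeasure_cylinder (by simpa using hw), cfMatrix_reverse,
    one_add_moebius_div_one_add_moebius_transpose (one_le_cfMatrix_one_one hw)]
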